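/- For every x ∈ (0,1), the derivative of the shifted weight satisfies (d/dx) W(x;a+1,b+2;d+2,c+2) = ((c+1)d(d+1))/((b+1)(d−a)) · ( W(x;a,b+1;c+1,d) − (cd/(ab))·x·W(x;a,b;c,d) ). -/

import Mathlib

open MeasureTheory

/-- Pochhammer symbol `(z)_n = z (z+1) ⋯ (z+n-1)`. -/
noncomputable def poch (z : ℝ) (n : ℕ) : ℝ := ∏ i ∈ Finset.range n, (z + i)

/-- Gauss hypergeometric series `₂F₁(α, β; γ; z)`. -/
noncomputable def twoF1 (α β γ z : ℝ) : ℝ :=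
  ∑' n : ℕ, (poch α n * poch β n) / (poch γ n * n.factorial) * z ^ n

/-- The weight function `W(x; a, b; c, d)`. -/
noncomputable def W (a b c d : ℝ) (x : ℝ) : ℝ :=
  (Real.Gamma c * Real.Gamma d) /
      (Real.Gamma a * Real.Gamma b * Real.Gamma (c + d - a - b)) *
    (x ^ (a - 1) * (1 - x) ^ (c + d - a - b - 1) *
      twoF1 (c - b) (d - b) (c + d - a - b) (1 - x))

/-! With `δ = c + d - a - b`, the shifted weight is a constant times
`x ^ a * (1 - x) ^ δ * ₂F₁(c - b, d - b; δ + 1; 1 - x)`. Two contiguous relations of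
`F = ₂F₁`, both checked coefficientwise, do all the work:
`d/dt [t ^ γ * F(α, β; γ + 1; t)] = γ * t ^ (γ - 1) * F(α, β; γ; t)` differentiates the shifted
weight, and `F(α, β - 1; γ; t) = (1 - t) F(α, β; γ; t) + (γ - α) / γ * t * F(α, β; γ + 1; t)`
rewrites `W(x; a, b + 1; c + 1, d)` in the same two functions. The rest is `Γ(s + 1) = s Γ(s)`. -/

open Filter Topology

lemma poch_succ (z : ℝ) (n : ℕ) : poch z (n + 1) = poch z n * (z + n) :=
  Finset.prod_range_succ _ _

lemma poch_succ' (z : ℝ) (n : ℕ) : poch z (n + 1) = z * poch (z + 1) n := by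
  rw [poch, poch, Finset.prod_range_succ', mul_comm]
  push_cast
  rw [add_zero]
  exact congrArg (z * ·) (Finset.prod_congr rfl fun i _ => by ring)

lemma poch_mul_add (z : ℝ) (n : ℕ) : poch z n * (z + n) = z * poch (z + 1) n := by
  rw [← poch_succ, poch_succ']

lemma poch_pos {z : ℝ} (hz : 0 < z) (n : ℕ) : 0 < poch z n :=
  Finset.prod_pos fun i _ => by positivity

noncomputable def twoF1Coeff (α β γ : ℝ) (n : ℕ) : ℝ :=
  poch α n * poch β n / (poch γ n * n.factorial)

lemma twoF1_eq_tsum (α β γ : ℝ) :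
    twoF1 α β γ = fun z => ∑' n, twoF1Coeff α β γ n * z ^ n := rfl

@[simp]
lemma twoF1Coeff_zero (α β γ : ℝ) : twoF1Coeff α β γ 0 = 1 := by
  simp [twoF1Coeff, poch]

lemma twoF1Coeff_comm (α β γ : ℝ) : twoF1Coeff α β γ = twoF1Coeff β α γ := by
  ext n
  rw [twoF1Coeff, twoF1Coeff, mul_comm (poch α n)]

lemma twoF1_comm (α β γ : ℝ) : twoF1 α β γ = twoF1 β α γ := by
  rw [twoF1_eq_tsum, twoF1_eq_tsum, twoF1Coeff_comm]

lemma twoF1Coeff_succ (α β γ : ℝ) (n : ℕ) :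
    twoF1Coeff α β γ (n + 1) =
      twoF1Coeff α β γ n * ((α + n) * (β + n) / ((γ + n) * (n + 1))) := by
  rw [twoF1Coeff, twoF1Coeff, div_mul_div_comm, poch_succ, poch_succ, poch_succ,
    Nat.factorial_succ]
  push_cast
  ring

lemma twoF1Coeff_param_succ (α β : ℝ) {γ : ℝ} (hγ : 0 < γ) (n : ℕ) :
    (γ + n) * twoF1Coeff α β (γ + 1) n = γ * twoF1Coeff α β γ n := by
  have := poch_pos hγ n
  have := poch_pos (by linarith : 0 < γ + 1) n
  rw [twoF1Coeff, twoF1Coeff]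
  field_simp
  linear_combination (poch α n * poch β n) * poch_mul_add γ n

lemma twoF1Coeff_sub_one_succ (α β : ℝ) {γ : ℝ} (hγ : 0 < γ) (n : ℕ) :
    twoF1Coeff α (β - 1) γ (n + 1) =
      twoF1Coeff α β γ (n + 1) - twoF1Coeff α β γ n +
        (γ - α) / γ * twoF1Coeff α β (γ + 1) n := by
  have := poch_pos hγ n
  have hpoch : poch (γ + 1) n = poch γ n * (γ + n) / γ :=
    eq_div_of_mul_eq hγ.ne' (by rw [mul_comm, poch_mul_add])
  rw [twoF1Coeff, twoF1Coeff, twoF1Coeff, twoF1Coeff, poch_succ α, poch_succ β, poch_succ γ,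
    poch_succ' (β - 1), sub_add_cancel, hpoch, Nat.factorial_succ]
  push_cast
  field_simp
  ring

lemma summable_of_norm_succ_eq_mul {f m : ℕ → ℝ} {l : ℝ} (hl : l < 1)
    (hm : Tendsto m atTop (𝓝 l)) (hf : ∀ n, ‖f (n + 1)‖ = m n * ‖f n‖) : Summable f := by
  obtain ⟨ρ, hlρ, hρ⟩ := exists_between hl
  refine summable_of_ratio_norm_eventually_le hρ ?_
  filter_upwards [hm.eventually (gt_mem_nhds hlρ)] with n hn
  rw [hf]
  exact mul_le_mul_of_nonneg_right hn.le (norm_nonneg _)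

lemma tendsto_twoF1_ratio (α β γ : ℝ) :
    Tendsto (fun n : ℕ => |(α + (n + 1)) * (β + (n + 1)) / ((γ + (n + 1)) * (n + 1))|)
      atTop (𝓝 1) := by
  have h (p q : ℝ) : Tendsto (fun n : ℕ => (p + 1 + 1 * n) / (q + 1 + 1 * n)) atTop (𝓝 1) := by
    simpa using tendsto_add_mul_div_add_mul_atTop_nhds (p + 1) (q + 1) (1 : ℝ) one_ne_zero
  have := ((h α 0).mul (h β γ)).abs
  rw [mul_one, abs_one] at this
  refine this.congr fun n => ?_
  rw [mul_div_mul_comm]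
  ring_nf

-- No condition on `γ`: where `poch γ n` vanishes, division by zero makes the coefficients `0`.
lemma summable_twoF1Coeff_deriv (α β γ : ℝ) {r : ℝ} (hr0 : 0 ≤ r) (hr1 : r < 1) :
    Summable fun n : ℕ => |twoF1Coeff α β γ (n + 1)| * (n + 1) * r ^ n := by
  refine summable_of_norm_succ_eq_mul (by simpa using hr1)
    ((tendsto_twoF1_ratio α β γ).mul_const r) fun n => ?_
  have hn : (0 : ℝ) < n + 1 := by positivity
  rw [Real.norm_of_nonneg (by positivity), Real.norm_of_nonneg (by positivity),
    twoF1Coeff_succ]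
  push_cast
  simp only [abs_mul, abs_div]
  rw [abs_of_pos hn, abs_of_pos (by positivity : (0 : ℝ) < n + 1 + 1)]
  field_simp
  ring

lemma hasDerivAt_tsum_mul_pow {c : ℕ → ℝ} {r z : ℝ}
    (hc : Summable fun n : ℕ => |c (n + 1)| * (n + 1) * r ^ n) (hz : |z| < r) :
    HasDerivAt (fun y => ∑' n, c n * y ^ n) (∑' n, c (n + 1) * (n + 1) * z ^ n) z := by
  have hu : Summable fun n : ℕ => |c n| * n * r ^ (n - 1) :=
    (summable_nat_add_iff 1).mp (by simpa using hc)
  have hbound : ∀ n, ∀ y ∈ Metric.ball (0 : ℝ) r,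
      ‖c n * (n * y ^ (n - 1))‖ ≤ |c n| * n * r ^ (n - 1) := by
    intro n y hy
    rw [mem_ball_zero_iff, Real.norm_eq_abs] at hy
    rw [Real.norm_eq_abs, abs_mul, abs_mul, abs_pow, Nat.abs_cast, ← mul_assoc]
    gcongr
  have hz' : z ∈ Metric.ball (0 : ℝ) r := by rwa [mem_ball_zero_iff, Real.norm_eq_abs]
  have hsum0 : Summable fun n : ℕ => c n * (0 : ℝ) ^ n :=
    summable_of_ne_finset_zero (s := {0}) fun n hn => by simp_all
  have hderiv := hasDerivAt_tsum_of_isPreconnected hu Metric.isOpen_ball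
    (convex_ball (0 : ℝ) r).isPreconnected (fun n y _ => (hasDerivAt_pow n y).const_mul (c n))
    hbound (Metric.mem_ball_self ((abs_nonneg z).trans_lt hz)) hsum0 hz'
  rw [(Summable.of_norm_bounded hu fun n => hbound n z hz').tsum_eq_zero_add] at hderiv
  simpa [mul_assoc] using hderiv

lemma hasDerivAt_twoF1 (α β γ : ℝ) {z : ℝ} (hz : |z| < 1) :
    HasDerivAt (twoF1 α β γ) (∑' n, twoF1Coeff α β γ (n + 1) * (n + 1) * z ^ n) z :=
  hasDerivAt_tsum_mul_pow
    (summable_twoF1Coeff_deriv α β γ (by positivity) (by linarith : (|z| + 1) / 2 < 1))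
    (by linarith)

lemma hasSum_twoF1 (α β γ : ℝ) {z : ℝ} (hz : |z| < 1) :
    HasSum (fun n => twoF1Coeff α β γ n * z ^ n) (twoF1 α β γ z) := by
  refine ((summable_nat_add_iff 1).mp (.of_norm_bounded
    (summable_twoF1Coeff_deriv α β γ (abs_nonneg z) hz) fun n => ?_)).hasSum
  have : |z| ≤ n + 1 := by linarith [(n.cast_nonneg : (0 : ℝ) ≤ n)]
  rw [Real.norm_eq_abs, abs_mul, abs_pow, pow_succ, ← mul_assoc, mul_right_comm _ (_ + _)]
  gcongr

lemma hasSum_twoF1_succ (α β γ : ℝ) {z : ℝ} (hz : |z| < 1) :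
    HasSum (fun n => twoF1Coeff α β γ (n + 1) * z ^ (n + 1)) (twoF1 α β γ z - 1) := by
  simpa using (hasSum_nat_add_iff' 1).mpr (hasSum_twoF1 α β γ hz)

lemma hasSum_twoF1_deriv (α β γ : ℝ) {z : ℝ} (hz : |z| < 1) :
    HasSum (fun n => twoF1Coeff α β γ (n + 1) * (n + 1) * z ^ n)
      (∑' n, twoF1Coeff α β γ (n + 1) * (n + 1) * z ^ n) :=
  Summable.hasSum <| .of_norm_bounded (summable_twoF1Coeff_deriv α β γ (abs_nonneg z) hz)
    fun n => by
      rw [Real.norm_eq_abs, abs_mul, abs_mul, abs_pow, abs_of_pos (by positivity : (0 : ℝ) < n + 1)]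

lemma mul_deriv_twoF1_param_succ (α β : ℝ) {γ t : ℝ} (hγ : 0 < γ) (ht : |t| < 1) :
    t * ∑' n, twoF1Coeff α β (γ + 1) (n + 1) * (n + 1) * t ^ n =
      γ * (twoF1 α β γ t - twoF1 α β (γ + 1) t) := by
  have hdiff :=
    ((hasSum_twoF1_succ α β γ ht).sub (hasSum_twoF1_succ α β (γ + 1) ht)).mul_left γ
  rw [sub_sub_sub_cancel_right] at hdiff
  refine ((hasSum_twoF1_deriv α β (γ + 1) ht).mul_left t).unique (hdiff.congr_fun fun n => ?_)
  have key := twoF1Coeff_param_succ α β hγ (n + 1)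
  push_cast at key
  linear_combination t ^ (n + 1) * key

lemma hasDerivAt_rpow_mul_twoF1 (α β : ℝ) {γ t : ℝ} (hγ : 0 < γ) (ht0 : 0 < t) (ht1 : t < 1) :
    HasDerivAt (fun s => s ^ γ * twoF1 α β (γ + 1) s) (γ * t ^ (γ - 1) * twoF1 α β γ t) t := by
  have ht : |t| < 1 := by rwa [abs_of_pos ht0]
  refine ((Real.hasDerivAt_rpow_const (p := γ) (Or.inl ht0.ne')).mul
    (hasDerivAt_twoF1 α β (γ + 1) ht)).congr_deriv ?_
  have hpow : t ^ γ = t ^ (γ - 1) * t := by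
    rw [Real.rpow_sub_one ht0.ne']
    field_simp
  rw [hpow, mul_assoc (t ^ (γ - 1)), mul_deriv_twoF1_param_succ α β hγ ht]
  ring

lemma twoF1_sub_one_right (α β : ℝ) {γ t : ℝ} (hγ : 0 < γ) (ht : |t| < 1) :
    twoF1 α (β - 1) γ t =
      (1 - t) * twoF1 α β γ t + (γ - α) / γ * t * twoF1 α β (γ + 1) t := by
  have hrhs := ((hasSum_twoF1_succ α β γ ht).sub ((hasSum_twoF1 α β γ ht).mul_left t)).add
    ((hasSum_twoF1 α β (γ + 1) ht).mul_left ((γ - α) / γ * t))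
  have hlhs := (hasSum_twoF1_succ α (β - 1) γ ht).unique <| hrhs.congr_fun fun n => by
    rw [twoF1Coeff_sub_one_succ α β hγ]
    ring
  linear_combination hlhs

lemma hasDerivAt_rpow_mul_one_sub_rpow_mul_twoF1 (p α β : ℝ) {γ x : ℝ} (hγ : 0 < γ)
    (hx0 : 0 < x) (hx1 : x < 1) :
    HasDerivAt (fun y => y ^ p * ((1 - y) ^ γ * twoF1 α β (γ + 1) (1 - y)))
      (p * x ^ (p - 1) * ((1 - x) ^ γ * twoF1 α β (γ + 1) (1 - x)) -
        x ^ p * (γ * (1 - x) ^ (γ - 1) * twoF1 α β γ (1 - x))) x := by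
  have hF := (hasDerivAt_rpow_mul_twoF1 α β (t := 1 - x) hγ (by linarith) (by linarith)).comp x
    ((hasDerivAt_id x).const_sub 1)
  exact ((Real.hasDerivAt_rpow_const (Or.inl hx0.ne')).mul hF).congr_deriv (by simp; ring)

lemma W_eq {a b c d α β δ : ℝ} (hα : c - b = α) (hβ : d - b = β) (hδ : c + d - a - b = δ)
    (x : ℝ) :
    W a b c d x = Real.Gamma c * Real.Gamma d / (Real.Gamma a * Real.Gamma b * Real.Gamma δ) *
      (x ^ (a - 1) * (1 - x) ^ (δ - 1) * twoF1 α β δ (1 - x)) := by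
  subst hα hβ hδ
  rfl

lemma Real.Gamma_add_two {s : ℝ} (hs : 0 < s) :
    Real.Gamma (s + 2) = (s + 1) * s * Real.Gamma s := by
  rw [show s + 2 = s + 1 + 1 by ring, Real.Gamma_add_one (by positivity),
    Real.Gamma_add_one hs.ne', mul_assoc]

lemma W_add_one_add_two_swap_eq (a b c d : ℝ) :
    W (a + 1) (b + 2) (d + 2) (c + 2) = fun y =>
      Real.Gamma (d + 2) * Real.Gamma (c + 2) /
          (Real.Gamma (a + 1) * Real.Gamma (b + 2) * Real.Gamma (c + d - a - b + 1)) *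
        (y ^ a * ((1 - y) ^ (c + d - a - b) *
          twoF1 (c - b) (d - b) (c + d - a - b + 1) (1 - y))) := by
  funext y
  rw [W_eq (α := d - b) (β := c - b) (δ := c + d - a - b + 1) (by ring) (by ring) (by ring),
    add_sub_cancel_right, add_sub_cancel_right, mul_assoc (y ^ a), twoF1_comm (d - b)]

/-- Derivative of the shifted weight `W(x;a+1,b+2;d+2,c+2)`:
`(d/dx) W(x;a+1,b+2;d+2,c+2)
  = ((c+1)d(d+1))/((b+1)(d−a)) · (W(x;a,b+1;c+1,d) − (cd/(ab))·x·W(x;a,b;c,d))`. -/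
theorem deriv_shifted_weight_second (a b c d : ℝ)
    (ha : 0 < a) (hb : 0 < b) (hc : 0 < c) (hd : 0 < d)
    (hcd : max a b < min c d) :
    ∀ x ∈ Set.Ioo (0 : ℝ) 1,
      deriv (W (a + 1) (b + 2) (d + 2) (c + 2)) x =
        (((c + 1) * d * (d + 1)) / ((b + 1) * (d - a))) *
          (W a (b + 1) (c + 1) d x - (c * d / (a * b)) * x * W a b c d x) := by
  rintro x ⟨hx0, hx1⟩
  have had : a < d := (le_max_left a b).trans_lt (hcd.trans_le (min_le_right c d))
  have hbc : b < c := (le_max_right a b).trans_lt (hcd.trans_le (min_le_left c d))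
  have hδ : 0 < c + d - a - b := by linarith
  have hx : |1 - x| < 1 := by rw [abs_of_pos (by linarith)]; linarith
  rw [W_add_one_add_two_swap_eq,
    ((hasDerivAt_rpow_mul_one_sub_rpow_mul_twoF1 a _ _ hδ hx0 hx1).const_mul _).deriv,
    W_eq (α := c - b) (β := d - b - 1) (δ := c + d - a - b) (by ring) (by ring) (by ring),
    W_eq rfl rfl rfl, twoF1_sub_one_right (c - b) (d - b) hδ hx,
    Real.Gamma_add_two hb, Real.Gamma_add_two hc, Real.Gamma_add_two hd,
    Real.Gamma_add_one ha.ne', Real.Gamma_add_one hb.ne', Real.Gamma_add_one hc.ne',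
    Real.Gamma_add_one hδ.ne', Real.rpow_sub_one hx0.ne',
    Real.rpow_sub_one (by linarith : 1 - x ≠ 0)]
  have := Real.Gamma_pos_of_pos ha
  have := Real.Gamma_pos_of_pos hb
  have := Real.Gamma_pos_of_pos hc
  have := Real.Gamma_pos_of_pos hd
  have := Real.Gamma_pos_of_pos hδ
  have : d - a ≠ 0 := by linarith
  have : 1 - x ≠ 0 := by linarith
  field_simp
  ring
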